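/- arXiv:2201.06017 — 5 statements merged into one kernel-verified Lean document; each statement's English description precedes it below -/
import Mathlib

section
/- Let V be a finite index set, E a real inner product space, and w : V → E a family of vectors. Define f(A) = ‖Σ_{i∈A} w_i‖ and h(A,B) = ⟨Σ_{i∈A} w_i, Σ_{i∈B} w_i⟩. Let A ⊆ B ⊆ V be finite sets and j ∈ V with j ∉ B, and assume f(A ∪ {j}) + f(A) > 0 and f(B ∪ {j}) + f(B) > 0. Set γ = (f(A ∪ {j}) + f(A)) / (f(B ∪ {j}) + f(B)). Then the marginal-gain inequality f(A ∪ {j}) − f(A) ≥ f(B ∪ {j}) − f(B) holds if and only if h(A,{j}) ≥ (1/2)(γ − 1)·h({j},{j}) + γ·h(B,{j}). -/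
open scoped RealInnerProductSpace

/-- with `γ = (f(A∪{j}) + f(A))/(f(B∪{j}) + f(B))`, the marginal-gain
inequality `f(A∪{j}) − f(A) ≥ f(B∪{j}) − f(B)` holds iff
`h(A,{j}) ≥ (1/2)(γ − 1) h({j},{j}) + γ h(B,{j})`. -/
theorem marginal_gain_iff
    {V : Type*} [Fintype V] [DecidableEq V]
    {E : Type*} [NormedAddCommGroup E] [InnerProductSpace ℝ E]
    (w : V → E)
    (f : Finset V → ℝ) (hf : ∀ A : Finset V, f A = ‖∑ i ∈ A, w i‖)
    (h : Finset V → Finset V → ℝ)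
    (hh : ∀ A B : Finset V, h A B = ⟪∑ i ∈ A, w i, ∑ i ∈ B, w i⟫)
    (A B : Finset V) (hAB : A ⊆ B) (j : V) (hj : j ∉ B)
    (hposA : 0 < f (insert j A) + f A) (hposB : 0 < f (insert j B) + f B)
    (γ : ℝ) (hγ : γ = (f (insert j A) + f A) / (f (insert j B) + f B)) :
    f (insert j B) - f B ≤ f (insert j A) - f A ↔
      (1 / 2) * (γ - 1) * h {j} {j} + γ * h B {j} ≤ h A {j} := by
  have hjA : j ∉ A := fun hx => hj (hAB hx)
  set a : E := ∑ i ∈ A, w i with ha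
  set b : E := ∑ i ∈ B, w i with hb
  set u : E := w j with hu
  have sA : ∑ i ∈ insert j A, w i = u + a := Finset.sum_insert hjA
  have sB : ∑ i ∈ insert j B, w i = u + b := Finset.sum_insert hj
  have sj : ∑ i ∈ ({j} : Finset V), w i = u := Finset.sum_singleton _ _
  set DA : ℝ := f (insert j A) + f A with hDA
  set DB : ℝ := f (insert j B) + f B with hDB
  set Q : ℝ := ‖u‖ ^ 2 with hQ
  set pa : ℝ := ⟪a, u⟫ with hpa
  set pb : ℝ := ⟪b, u⟫ with hpb
  have hAj : h A {j} = pa := by rw [hh, sj]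
  have hBj : h B {j} = pb := by rw [hh, sj]
  have hjj : h {j} {j} = Q := by
    rw [hh, sj, hQ, real_inner_self_eq_norm_sq]
  set NA : ℝ := Q + 2 * pa with hNA
  set NB : ℝ := Q + 2 * pb with hNB
  have keyA : f (insert j A) ^ 2 - f A ^ 2 = NA := by
    rw [hf, hf, sA, hNA, hQ, hpa, norm_add_sq_real, real_inner_comm]; ring
  have keyB : f (insert j B) ^ 2 - f B ^ 2 = NB := by
    rw [hf, hf, sB, hNB, hQ, hpb, norm_add_sq_real, real_inner_comm]; ring
  have eqA : f (insert j A) - f A = NA / DA := by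
    rw [eq_div_iff hposA.ne', ← keyA, hDA]; ring
  have eqB : f (insert j B) - f B = NB / DB := by
    rw [eq_div_iff hposB.ne', ← keyB, hDB]; ring
  have hform : (1 / 2) * (γ - 1) * Q + γ * pb
      = ((DA - DB) * Q + 2 * DA * pb) / (2 * DB) := by
    rw [hγ]; field_simp
  rw [eqA, eqB, hAj, hBj, hjj, hform,
    div_le_div_iff₀ hposB hposA, div_le_iff₀ (by positivity : (0:ℝ) < 2 * DB)]
  constructor <;> intro H <;> [nlinarith; nlinarith]
end

section
/- Let V be a finite index set, E a real inner product space, and w : V → E a family of vectors. Define f(A) = ‖Σ_{i∈A} w_i‖ and h(A,B) = ⟨Σ_{i∈A} w_i, Σ_{i∈B} w_i⟩. Assume nondegeneracy: f(A ∪ {j}) + f(A) > 0 for every finite A ⊆ V and every j ∉ A. For A ⊆ B ⊆ V and j ∉ B let γ(A,B,j) = (f(A ∪ {j}) + f(A)) / (f(B ∪ {j}) + f(B)). Then f is normalized (f(∅) = 0), monotone non-decreasing, and submodular if and only if both of the following hold: (i) for all A ⊆ B ⊆ V, h(B\A, B\A) + 2·h(A, B\A) ≥ 0; and (ii) for all A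 ⊆ B ⊆ V and all j ∉ B, h(A,{j}) ≥ (1/2)(γ(A,B,j) − 1)·h({j},{j}) + γ(A,B,j)·h(B,{j}). -/
open scoped RealInnerProductSpace

/-!
Write `S A = ∑ i ∈ A, w i`. Every condition compares `‖x‖` with `‖x + y‖`, and
`‖x + y‖² - ‖x‖² = ⟪y, y⟫ + 2 ⟪x, y⟫`. Monotonicity on `A ⊆ B` is the sign of this quantity for
`x = S A`, `y = S (B \ A)`. For submodularity, dividing by `‖x + y‖ + ‖x‖` turns the marginal gain
of `j` into `(h {j} {j} + 2 h A {j}) / (f (insert j A) + f A)`, and comparing two such quotients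
with positive denominators is condition (ii), whose coefficient `γ` is the ratio of denominators.
-/

section InnerProduct

variable {E : Type*} [NormedAddCommGroup E] [InnerProductSpace ℝ E]

theorem norm_add_sq_eq_norm_sq_add_inner (x y : E) :
    ‖x + y‖ ^ 2 = ‖x‖ ^ 2 + (⟪y, y⟫ + 2 * ⟪x, y⟫) := by
  rw [norm_add_sq_real, real_inner_self_eq_norm_sq]
  ring

theorem norm_le_norm_add_iff (x y : E) : ‖x‖ ≤ ‖x + y‖ ↔ 0 ≤ ⟪y, y⟫ + 2 * ⟪x, y⟫ := by
  rw [← pow_le_pow_iff_left₀ (norm_nonneg x) (norm_nonneg (x + y)) two_ne_zero,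
    norm_add_sq_eq_norm_sq_add_inner]
  constructor <;> intro h <;> linarith

/-- Holds without a positivity hypothesis: if `‖x + y‖ + ‖x‖ = 0` then `x = y = 0`. -/
theorem norm_add_sub_norm_eq_div (x y : E) :
    ‖x + y‖ - ‖x‖ = (⟪y, y⟫ + 2 * ⟪x, y⟫) / (‖x + y‖ + ‖x‖) := by
  rw [← sub_eq_iff_eq_add'.2 (norm_add_sq_eq_norm_sq_add_inner x y)]
  rcases (add_nonneg (norm_nonneg (x + y)) (norm_nonneg x)).eq_or_lt with hzero | hpos
  · have hx : ‖x‖ = 0 := by linarith [norm_nonneg (x + y), norm_nonneg x]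
    have hxy : ‖x + y‖ = 0 := by linarith
    simp [hx, hxy]
  · rw [eq_div_iff hpos.ne']
    ring

end InnerProduct

theorem div_le_div_iff_ratio_mul_le {a b p q r : ℝ} (ha : 0 < a) (hb : 0 < b) :
    (r + 2 * q) / b ≤ (r + 2 * p) / a ↔ 1 / 2 * (a / b - 1) * r + a / b * q ≤ p := by
  have hdiff : p - (1 / 2 * (a / b - 1) * r + a / b * q) =
      ((r + 2 * p) * b - (r + 2 * q) * a) / (2 * b) := by
    field_simp
    ring
  rw [div_le_div_iff₀ hb ha, ← sub_nonneg (a := p), hdiff, le_div_iff₀ (by positivity),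
    zero_mul, sub_nonneg]

theorem submodular_conditions_iff_general
    {V : Type*} [DecidableEq V]
    {E : Type*} [NormedAddCommGroup E] [InnerProductSpace ℝ E]
    (w : V → E)
    (f : Finset V → ℝ) (hf : ∀ A : Finset V, f A = ‖∑ i ∈ A, w i‖)
    (h : Finset V → Finset V → ℝ)
    (hh : ∀ A B : Finset V, h A B = ⟪∑ i ∈ A, w i, ∑ i ∈ B, w i⟫)
    (hnondeg : ∀ (A : Finset V), ∀ j ∉ A, 0 < f (insert j A) + f A)
    (γ : Finset V → Finset V → V → ℝ)
    (hγ : ∀ (A B : Finset V) (j : V),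
      γ A B j = (f (insert j A) + f A) / (f (insert j B) + f B)) :
    (f ∅ = 0 ∧
     (∀ A B : Finset V, A ⊆ B → f A ≤ f B) ∧
     (∀ A B : Finset V, A ⊆ B → ∀ j ∉ B,
        f (insert j B) - f B ≤ f (insert j A) - f A)) ↔
    ((∀ A B : Finset V, A ⊆ B → h (B \ A) (B \ A) + 2 * h A (B \ A) ≥ 0) ∧
     (∀ A B : Finset V, A ⊆ B → ∀ j ∉ B,
        (1 / 2) * (γ A B j - 1) * h {j} {j} + γ A B j * h B {j} ≤ h A {j})) := by
  have hempty : f ∅ = 0 := by simp [hf]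
  have mono_iff (A B : Finset V) (hAB : A ⊆ B) :
      f A ≤ f B ↔ h (B \ A) (B \ A) + 2 * h A (B \ A) ≥ 0 := by
    rw [hf, hf, hh, hh, ← Finset.sum_sdiff hAB, add_comm, norm_le_norm_add_iff]
  have gain_eq (A : Finset V) (j : V) (hj : j ∉ A) :
      f (insert j A) - f A = (h {j} {j} + 2 * h A {j}) / (f (insert j A) + f A) := by
    simp only [hf, hh, Finset.sum_insert hj, Finset.sum_singleton, add_comm (w j)]
    exact norm_add_sub_norm_eq_div _ _
  have submod_iff (A B : Finset V) (hAB : A ⊆ B) (j : V) (hjB : j ∉ B) :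
      f (insert j B) - f B ≤ f (insert j A) - f A ↔
        (1 / 2) * (γ A B j - 1) * h {j} {j} + γ A B j * h B {j} ≤ h A {j} := by
    have hjA : j ∉ A := fun hjA => hjB (hAB hjA)
    rw [gain_eq A j hjA, gain_eq B j hjB, hγ]
    exact div_le_div_iff_ratio_mul_le (hnondeg A j hjA) (hnondeg B j hjB)
  constructor
  · rintro ⟨-, hmono, hsubmod⟩
    exact ⟨fun A B hAB => (mono_iff A B hAB).1 (hmono A B hAB),
      fun A B hAB j hj => (submod_iff A B hAB j hj).1 (hsubmod A B hAB j hj)⟩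
  · rintro ⟨hi, hii⟩
    exact ⟨hempty, fun A B hAB => (mono_iff A B hAB).2 (hi A B hAB),
      fun A B hAB j hj => (submod_iff A B hAB j hj).2 (hii A B hAB j hj)⟩

/-- Theorem 1, submodular conditions: under the nondegeneracy assumption,
`f` is normalized, monotone non-decreasing, and submodular iff conditions (i) and (ii) hold. -/
theorem submodular_conditions_iff
    {V : Type*} [Fintype V] [DecidableEq V]
    {E : Type*} [NormedAddCommGroup E] [InnerProductSpace ℝ E]
    (w : V → E)
    (f : Finset V → ℝ) (hf : ∀ A : Finset V, f A = ‖∑ i ∈ A, w i‖)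
    (h : Finset V → Finset V → ℝ)
    (hh : ∀ A B : Finset V, h A B = ⟪∑ i ∈ A, w i, ∑ i ∈ B, w i⟫)
    (hnondeg : ∀ (A : Finset V), ∀ j ∉ A, 0 < f (insert j A) + f A)
    (γ : Finset V → Finset V → V → ℝ)
    (hγ : ∀ (A B : Finset V) (j : V),
      γ A B j = (f (insert j A) + f A) / (f (insert j B) + f B)) :
    (f ∅ = 0 ∧
     (∀ A B : Finset V, A ⊆ B → f A ≤ f B) ∧
     (∀ A B : Finset V, A ⊆ B → ∀ j ∉ B,
        f (insert j B) - f B ≤ f (insert j A) - f A)) ↔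
    ((∀ A B : Finset V, A ⊆ B → h (B \ A) (B \ A) + 2 * h A (B \ A) ≥ 0) ∧
     (∀ A B : Finset V, A ⊆ B → ∀ j ∉ B,
        (1 / 2) * (γ A B j - 1) * h {j} {j} + γ A B j * h B {j} ≤ h A {j})) :=
  submodular_conditions_iff_general w f hf h hh hnondeg γ hγ
end

section
/- Let V be a finite set, c : V → ℝ with c(a) > 0 for all a ∈ V, and f a set function on finite subsets of V that is monotone non-decreasing and submodular. Let A*, S ⊆ V be finite sets and s ∈ V with s ∉ S. If for every a ∈ A* \ S one has (f(S ∪ {a}) − f(S))/c(a) ≤ (f(S ∪ {s}) − f(S))/c(s), then f(A*) − f(S) ≤ (Σ_{a∈A*} c(a)) · (f(S ∪ {s}) − f(S))/c(s). -/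
/-! Submodularity bounds the gain `f (S ∪ A*) - f S` by the sum of the single-element gains
`f (S ∪ {a}) - f S` over `a ∈ A*`. Each gain is at most `c a` times the best gain per unit cost
`r = (f (S ∪ {s}) - f S) / c s`: by the greedy choice when `a ∉ S`, and trivially when `a ∈ S`,
where the gain is `0 ≤ r` by monotonicity. Summing gives the claim. -/

open Finset

/-- No disjointness of `S` and `T` is needed: an element of `S` has gain `0`. -/
theorem Finset.sub_le_sum_insert_sub_of_submodular {α β : Type*} [DecidableEq α]
    [AddCommGroup β] [PartialOrder β] [IsOrderedAddMonoid β] (f : Finset α → β)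
    (hsub : ∀ A B : Finset α, A ⊆ B → ∀ j ∉ B,
      f (insert j B) - f B ≤ f (insert j A) - f A)
    (S T : Finset α) :
    f (S ∪ T) - f S ≤ ∑ a ∈ T, (f (insert a S) - f S) := by
  induction T using Finset.induction_on with
  | empty => simp
  | insert j T hjT ih =>
    rw [sum_insert hjT, union_insert]
    by_cases hjS : j ∈ S
    · rw [insert_eq_of_mem (mem_union_left T hjS), insert_eq_of_mem hjS, sub_self, zero_add]
      exact ih
    · have hgain := hsub S (S ∪ T) subset_union_left j (by simp [hjS, hjT])
      calc f (insert j (S ∪ T)) - f S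
          = (f (insert j (S ∪ T)) - f (S ∪ T)) + (f (S ∪ T) - f S) := by abel
        _ ≤ (f (insert j S) - f S) + ∑ a ∈ T, (f (insert a S) - f S) := add_le_add hgain ih

theorem greedy_step_bound_general
    {V : Type*} [DecidableEq V]
    (c : V → ℝ) (hc : ∀ a, 0 < c a)
    (f : Finset V → ℝ)
    (hmono : ∀ A B : Finset V, A ⊆ B → f A ≤ f B)
    (hsub : ∀ A B : Finset V, A ⊆ B → ∀ j ∉ B,
      f (insert j B) - f B ≤ f (insert j A) - f A)
    (Astar S : Finset V) (s : V)
    (hgreedy : ∀ a ∈ Astar \ S,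
      (f (insert a S) - f S) / c a ≤ (f (insert s S) - f S) / c s) :
    f Astar - f S ≤ (∑ a ∈ Astar, c a) * ((f (insert s S) - f S) / c s) := by
  set r := (f (insert s S) - f S) / c s
  have hr : 0 ≤ r := div_nonneg (sub_nonneg.2 (hmono _ _ (subset_insert s S))) (hc s).le
  have hgain_le : ∀ a ∈ Astar, f (insert a S) - f S ≤ c a * r := by
    intro a ha
    by_cases haS : a ∈ S
    · rw [insert_eq_of_mem haS, sub_self]
      exact mul_nonneg (hc a).le hr
    · rw [mul_comm, ← div_le_iff₀ (hc a)]
      exact hgreedy a (mem_sdiff.2 ⟨ha, haS⟩)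
  calc f Astar - f S ≤ f (S ∪ Astar) - f S := sub_le_sub_right (hmono _ _ subset_union_right) _
    _ ≤ ∑ a ∈ Astar, (f (insert a S) - f S) := sub_le_sum_insert_sub_of_submodular f hsub S Astar
    _ ≤ ∑ a ∈ Astar, c a * r := sum_le_sum hgain_le
    _ = (∑ a ∈ Astar, c a) * r := (sum_mul _ _ _).symm

/-- greedy per-step inequality. If `s` maximizes the marginal gain per
unit cost over `A* \ S`, then `f(A*) − f(S) ≤ (∑_{a∈A*} c a) · (f(S ∪ {s}) − f(S))/c(s)`. -/
theorem greedy_step_bound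
    {V : Type*} [Fintype V] [DecidableEq V]
    (c : V → ℝ) (hc : ∀ a, 0 < c a)
    (f : Finset V → ℝ)
    (hmono : ∀ A B : Finset V, A ⊆ B → f A ≤ f B)
    (hsub : ∀ A B : Finset V, A ⊆ B → ∀ j ∉ B,
      f (insert j B) - f B ≤ f (insert j A) - f A)
    (Astar S : Finset V) (s : V) (hs : s ∉ S)
    (hgreedy : ∀ a ∈ Astar \ S,
      (f (insert a S) - f S) / c a ≤ (f (insert s S) - f S) / c s) :
    f Astar - f S ≤ (∑ a ∈ Astar, c a) * ((f (insert s S) - f S) / c s) :=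
  greedy_step_bound_general c hc f hmono hsub Astar S s hgreedy
end

section
/- Let V be a finite set, c : V → ℝ with c(a) > 0 for all a, and f a set function on finite subsets of V that is normalized (f(∅) = 0), monotone non-decreasing, and submodular. Let s_1, …, s_l ∈ V be distinct, let S_0 = ∅ and S_i = S_{i−1} ∪ {s_i}, and suppose the greedy property holds: for each i ∈ {1,…,l} and every a ∈ V \ S_{i−1}, (f(S_{i−1} ∪ {a}) − f(S_{i−1}))/c(a) ≤ (f(S_i) − f(S_{i−1}))/c(s_i). Let A* ⊆ V with Ω* := Σ_{a∈A*} c(a) > 0 and suppose c(s_j) ≤ Ω* for every j ≤ l. Then for every i ∈ {0,1,…,l}, f(S_i) ≥ (1 − Π_{j=1}^{i} (1 − c(s_j)/Ω*)) · f(A*). -/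
lemma greedy_tel {V : Type*} [DecidableEq V]
    (f : Finset V → ℝ)
    (hmono : ∀ A B : Finset V, A ⊆ B → f A ≤ f B)
    (hsub : ∀ A B : Finset V, A ⊆ B → ∀ j ∉ B,
      f (insert j B) - f B ≤ f (insert j A) - f A) :
    ∀ (T Sa : Finset V), f (Sa ∪ T) - f Sa ≤ ∑ a ∈ T, (f (insert a Sa) - f Sa) := by
  intro T
  induction T using Finset.induction with
  | empty => intro Sa; simp
  | @insert a T ha ih =>
    intro Sa
    rw [Finset.union_insert, Finset.sum_insert ha]
    by_cases haS : a ∈ Sa ∪ T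
    · have h1 : insert a (Sa ∪ T) = Sa ∪ T := Finset.insert_eq_self.2 haS
      have haSa : a ∈ Sa := by
        rcases Finset.mem_union.1 haS with h | h
        · exact h
        · exact absurd h ha
      have h2 : insert a Sa = Sa := Finset.insert_eq_self.2 haSa
      rw [h1, h2]
      have := ih Sa
      linarith
    · have h1 := hsub Sa (Sa ∪ T) Finset.subset_union_left a haS
      have h2 := ih Sa
      linarith

/-- greedy iterate bound. If the greedy algorithm builds
`S_i = S_{i-1} ∪ {s_i}` by adding the element of maximal marginal gain per unit cost, then
`f(S_i) ≥ (1 − ∏_{j=1}^{i} (1 − c(s_j)/Ω*)) · f(A*)`. -/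
theorem greedy_iterate_bound
    {V : Type*} [Fintype V] [DecidableEq V]
    (c : V → ℝ) (hc : ∀ a, 0 < c a)
    (f : Finset V → ℝ)
    (hnorm : f ∅ = 0)
    (hmono : ∀ A B : Finset V, A ⊆ B → f A ≤ f B)
    (hsub : ∀ A B : Finset V, A ⊆ B → ∀ j ∉ B,
      f (insert j B) - f B ≤ f (insert j A) - f A)
    (l : ℕ) (s : ℕ → V)
    (hdist : ∀ i < l, ∀ j < l, s i = s j → i = j)
    (S : ℕ → Finset V)
    (hS0 : S 0 = ∅)
    (hSstep : ∀ i < l, S (i + 1) = insert (s i) (S i))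
    (hgreedy : ∀ i < l, ∀ a : V, a ∉ S i →
      (f (insert a (S i)) - f (S i)) / c a ≤ (f (S (i + 1)) - f (S i)) / c (s i))
    (Astar : Finset V) (Ωstar : ℝ) (hΩstar : Ωstar = ∑ a ∈ Astar, c a)
    (hΩpos : 0 < Ωstar)
    (hcost : ∀ j < l, c (s j) ≤ Ωstar) :
    ∀ i ≤ l, (1 - ∏ j ∈ Finset.range i, (1 - c (s j) / Ωstar)) * f Astar ≤ f (S i) := by
  -- S i is the image of range i under s
  have hSim : ∀ i ≤ l, S i = (Finset.range i).image s := by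
    intro i
    induction i with
    | zero => intro _; simp [hS0]
    | succ n ih =>
      intro hn
      have hn' : n < l := hn
      rw [hSstep n hn', ih (Nat.le_of_lt hn'), Finset.range_add_one,
        Finset.image_insert]
  have hnotin : ∀ i < l, s i ∉ S i := by
    intro i hi hmem
    rw [hSim i (Nat.le_of_lt hi)] at hmem
    obtain ⟨j, hj, hje⟩ := Finset.mem_image.1 hmem
    have hj' : j < i := Finset.mem_range.1 hj
    have := hdist i hi j (lt_trans hj' hi) hje.symm
    omega
  intro i hi
  induction i with
  | zero => simp [hS0, hnorm]
  | succ n ih =>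
    have hn' : n < l := hi
    have ih' := ih (Nat.le_of_lt hn')
    set P := ∏ j ∈ Finset.range n, (1 - c (s j) / Ωstar) with hP
    set r := c (s n) / Ωstar with hr
    have hrpos : 0 < r := div_pos (hc _) hΩpos
    have hr1 : r ≤ 1 := (div_le_one hΩpos).2 (hcost n hn')
    set θ := (f (S (n + 1)) - f (S n)) / c (s n) with hθ
    have hΔ : 0 ≤ f (S (n + 1)) - f (S n) := by
      rw [hSstep n hn']
      have := hmono (S n) (insert (s n) (S n)) (Finset.subset_insert _ _)
      linarith
    have hθ0 : 0 ≤ θ := div_nonneg hΔ (le_of_lt (hc _))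
    -- key: f Astar ≤ f (S n) + Ωstar * θ
    have hkey : f Astar ≤ f (S n) + Ωstar * θ := by
      have h1 : f Astar ≤ f (S n ∪ (Astar \ S n)) :=
        hmono _ _ (by rw [Finset.union_sdiff_self_eq_union]; exact Finset.subset_union_right)
      have h2 := greedy_tel f hmono hsub (Astar \ S n) (S n)
      have h3 : ∑ a ∈ Astar \ S n, (f (insert a (S n)) - f (S n))
          ≤ ∑ a ∈ Astar \ S n, c a * θ := by
        apply Finset.sum_le_sum
        intro a haa
        have hanot : a ∉ S n := (Finset.mem_sdiff.1 haa).2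
        have := hgreedy n hn' a hanot
        rw [div_le_iff₀ (hc a)] at this
        calc f (insert a (S n)) - f (S n) ≤ (f (S (n+1)) - f (S n)) / c (s n) * c a := this
          _ = c a * θ := by rw [hθ]; ring
      have h4 : ∑ a ∈ Astar \ S n, c a * θ ≤ Ωstar * θ := by
        rw [← Finset.sum_mul]
        apply mul_le_mul_of_nonneg_right _ hθ0
        rw [hΩstar]
        exact Finset.sum_le_sum_of_subset_of_nonneg (Finset.sdiff_subset)
          (fun a _ _ => le_of_lt (hc a))
      linarith
    -- step inequality
    have hstep : f (S n) + r * (f Astar - f (S n)) ≤ f (S (n + 1)) := by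
      have hcs : c (s n) ≠ 0 := ne_of_gt (hc _)
      have hrθ : r * (Ωstar * θ) = f (S (n + 1)) - f (S n) := by
        rw [hr, hθ]
        field_simp
      have : r * (f Astar - f (S n)) ≤ r * (Ωstar * θ) :=
        mul_le_mul_of_nonneg_left (by linarith) (le_of_lt hrpos)
      linarith [this, hrθ ▸ this]
    rw [Finset.prod_range_succ, ← hP, ← hr]
    have h1r : 0 ≤ 1 - r := by linarith
    have hpos : 0 ≤ (1 - r) * (f (S n) - (1 - P) * f Astar) :=
      mul_nonneg h1r (by linarith)
    nlinarith [hpos, hstep]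
end

section
/- Let V be a finite set, c : V → ℝ with c(a) > 0 for all a, Ω > 0, and f a set function on finite subsets of V that is normalized (f(∅) = 0), monotone non-decreasing, and submodular. Let s_1, …, s_l ∈ V be distinct, let S_0 = ∅ and S_i = S_{i−1} ∪ {s_i}, and suppose the greedy property holds: for each i ∈ {1,…,l} and every a ∈ V \ S_{i−1}, (f(S_{i−1} ∪ {a}) − f(S_{i−1}))/c(a) ≤ (f(S_i) − f(S_{i−1}))/c(s_i). Let A* ⊆ V be any set with 0 < Σ_{a∈A*} c(a) ≤ Ω and suppose c(s_j) ≤ Σ_{a∈A*} c(a) for every j ≤ l. Then, writing Ŝ = S_l and c(Ŝ) = Σ_{j=1}^{l} c(s_j), one has f(Ŝ) − f(∅) ≥ (1 − e^{−c(Ŝ)/Ω}) · (f(A*) − f(∅)), i.e., f(Ŝ) ≥ (1 − e^{−c(Ŝ)/Ω}) · f(A*). -/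
private lemma marginal_sum {V : Type*} [DecidableEq V]
    (f : Finset V → ℝ)
    (hmono : ∀ A B : Finset V, A ⊆ B → f A ≤ f B)
    (hsub : ∀ A B : Finset V, A ⊆ B → ∀ j ∉ B,
      f (insert j B) - f B ≤ f (insert j A) - f A)
    (A T : Finset V) :
    f (A ∪ T) - f T ≤ ∑ a ∈ A \ T, (f (insert a T) - f T) := by
  classical
  induction A using Finset.induction_on with
  | empty => simp
  | @insert j A hj ih =>
    by_cases hjT : j ∈ T
    · have h1 : insert j A ∪ T = A ∪ T := by
        rw [Finset.insert_union, Finset.insert_eq_self.mpr (Finset.mem_union_right _ hjT)]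
      have h2 : (insert j A) \ T = A \ T := Finset.insert_sdiff_of_mem A hjT
      rw [h1, h2]; exact ih
    · have hjAT : j ∉ A ∪ T := by simp [hj, hjT]
      have hs := hsub T (A ∪ T) Finset.subset_union_right j hjAT
      have h2 : (insert j A) \ T = insert j (A \ T) :=
        Finset.insert_sdiff_of_notMem A hjT
      have hjAd : j ∉ A \ T := by simp [hj]
      rw [h2, Finset.sum_insert hjAd, Finset.insert_union]
      linarith

/-- Theorem 2, suboptimality bound of FDI-ASSA: the greedy set `Ŝ = S_l`
satisfies `f(Ŝ) − f(∅) ≥ (1 − e^{−c(Ŝ)/Ω}) (f(A*) − f(∅))`, i.e.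
`f(Ŝ) ≥ (1 − e^{−c(Ŝ)/Ω}) f(A*)`. -/
theorem greedy_suboptimality_bound
    {V : Type*} [Fintype V] [DecidableEq V]
    (c : V → ℝ) (hc : ∀ a, 0 < c a) (Ω : ℝ) (hΩ : 0 < Ω)
    (f : Finset V → ℝ)
    (hnorm : f ∅ = 0)
    (hmono : ∀ A B : Finset V, A ⊆ B → f A ≤ f B)
    (hsub : ∀ A B : Finset V, A ⊆ B → ∀ j ∉ B,
      f (insert j B) - f B ≤ f (insert j A) - f A)
    (l : ℕ) (s : ℕ → V)
    (hdist : ∀ i < l, ∀ j < l, s i = s j → i = j)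
    (S : ℕ → Finset V)
    (hS0 : S 0 = ∅)
    (hSstep : ∀ i < l, S (i + 1) = insert (s i) (S i))
    (hgreedy : ∀ i < l, ∀ a : V, a ∉ S i →
      (f (insert a (S i)) - f (S i)) / c a ≤ (f (S (i + 1)) - f (S i)) / c (s i))
    (Astar : Finset V)
    (hpos : 0 < ∑ a ∈ Astar, c a) (hbudget : ∑ a ∈ Astar, c a ≤ Ω)
    (hcost : ∀ j < l, c (s j) ≤ ∑ a ∈ Astar, c a) :
    (1 - Real.exp (-(∑ j ∈ Finset.range l, c (s j)) / Ω)) * (f Astar - f ∅) ≤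
      f (S l) - f ∅ ∧
    (1 - Real.exp (-(∑ j ∈ Finset.range l, c (s j)) / Ω)) * f Astar ≤ f (S l) := by
  classical
  set cA : ℝ := ∑ a ∈ Astar, c a with hcA
  have hfA : 0 ≤ f Astar := by
    have := hmono ∅ Astar (Finset.empty_subset _); linarith [hnorm]
  -- per-step inequality
  have step : ∀ i < l,
      f Astar - f (S (i + 1)) ≤ (1 - c (s i) / cA) * (f Astar - f (S i)) := by
    intro i hi
    have hδ : 0 ≤ f (S (i + 1)) - f (S i) := by
      have : S i ⊆ S (i + 1) := by rw [hSstep i hi]; exact Finset.subset_insert _ _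
      linarith [hmono _ _ this]
    set δ := f (S (i + 1)) - f (S i) with hδdef
    have hmarg := marginal_sum f hmono hsub Astar (S i)
    have hup : f Astar ≤ f (Astar ∪ S i) := hmono _ _ Finset.subset_union_left
    have hterm : ∀ a ∈ Astar \ S i,
        f (insert a (S i)) - f (S i) ≤ c a * (δ / c (s i)) := by
      intro a ha
      have haS : a ∉ S i := (Finset.mem_sdiff.mp ha).2
      have hg := hgreedy i hi a haS
      have hca := hc a
      calc f (insert a (S i)) - f (S i)
          = (f (insert a (S i)) - f (S i)) / c a * c a := by field_simp
        _ ≤ δ / c (s i) * c a := by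
            apply mul_le_mul_of_nonneg_right hg hca.le
        _ = c a * (δ / c (s i)) := by ring
    have hsum1 : ∑ a ∈ Astar \ S i, (f (insert a (S i)) - f (S i))
        ≤ ∑ a ∈ Astar \ S i, c a * (δ / c (s i)) :=
      Finset.sum_le_sum hterm
    have hr : 0 ≤ δ / c (s i) := div_nonneg hδ (hc (s i)).le
    have hsum2 : ∑ a ∈ Astar \ S i, c a * (δ / c (s i)) ≤ cA * (δ / c (s i)) := by
      rw [← Finset.sum_mul]
      apply mul_le_mul_of_nonneg_right _ hr
      exact Finset.sum_le_sum_of_subset_of_nonneg (Finset.sdiff_subset)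
        (fun a _ _ => (hc a).le)
    have hkey : f Astar - f (S i) ≤ cA * (δ / c (s i)) := by linarith
    -- multiply by c (s i) / cA
    have hcsi := hc (s i)
    have h1 : c (s i) * (f Astar - f (S i)) ≤ cA * δ := by
      have := mul_le_mul_of_nonneg_left hkey hcsi.le
      calc c (s i) * (f Astar - f (S i)) ≤ c (s i) * (cA * (δ / c (s i))) := this
        _ = cA * δ := by field_simp
    have h2 : c (s i) * (f Astar - f (S i)) / cA ≤ δ := by
      rw [div_le_iff₀ hpos]; linarith [h1]
    have heq : (1 - c (s i) / cA) * (f Astar - f (S i))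
        = (f Astar - f (S i)) - c (s i) * (f Astar - f (S i)) / cA := by ring
    linarith [h2]
  -- induction
  have key : ∀ i, i ≤ l →
      f Astar - f (S i) ≤ Real.exp (-(∑ j ∈ Finset.range i, c (s j)) / cA) * f Astar := by
    intro i
    induction i with
    | zero => intro _; simp [hS0, hnorm]
    | succ i ih =>
      intro hil
      have hi : i < l := hil
      have ihh := ih (Nat.le_of_lt hi)
      have hst := step i hi
      have hr0 : 0 ≤ 1 - c (s i) / cA := by
        have := hcost i hi
        have : c (s i) / cA ≤ 1 := (div_le_one hpos).mpr this
        linarith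
      have hE : 0 ≤ Real.exp (-(∑ j ∈ Finset.range i, c (s j)) / cA) * f Astar :=
        mul_nonneg (Real.exp_nonneg _) hfA
      have h1 : f Astar - f (S (i + 1))
          ≤ (1 - c (s i) / cA) * (Real.exp (-(∑ j ∈ Finset.range i, c (s j)) / cA) * f Astar) := by
        calc f Astar - f (S (i + 1)) ≤ (1 - c (s i) / cA) * (f Astar - f (S i)) := hst
          _ ≤ _ := mul_le_mul_of_nonneg_left ihh hr0
      have hexp : 1 - c (s i) / cA ≤ Real.exp (-(c (s i) / cA)) := by
        linarith [Real.add_one_le_exp (-(c (s i) / cA))]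
      have h2 : (1 - c (s i) / cA) * (Real.exp (-(∑ j ∈ Finset.range i, c (s j)) / cA) * f Astar)
          ≤ Real.exp (-(c (s i) / cA)) * (Real.exp (-(∑ j ∈ Finset.range i, c (s j)) / cA) * f Astar) :=
        mul_le_mul_of_nonneg_right hexp hE
      have h3 : Real.exp (-(c (s i) / cA)) * Real.exp (-(∑ j ∈ Finset.range i, c (s j)) / cA)
          = Real.exp (-(∑ j ∈ Finset.range (i + 1), c (s j)) / cA) := by
        rw [← Real.exp_add, Finset.sum_range_succ]
        congr 1
        field_simp
        ring
      calc f Astar - f (S (i + 1))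
          ≤ Real.exp (-(c (s i) / cA)) * (Real.exp (-(∑ j ∈ Finset.range i, c (s j)) / cA) * f Astar) := le_trans h1 h2
        _ = Real.exp (-(∑ j ∈ Finset.range (i + 1), c (s j)) / cA) * f Astar := by
            rw [← mul_assoc, h3]
  have hkeyl := key l le_rfl
  have hC : 0 ≤ ∑ j ∈ Finset.range l, c (s j) :=
    Finset.sum_nonneg fun j _ => (hc (s j)).le
  have hdiv : (∑ j ∈ Finset.range l, c (s j)) / Ω ≤ (∑ j ∈ Finset.range l, c (s j)) / cA :=
    div_le_div_of_nonneg_left hC hpos hbudget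
  have hexpm : Real.exp (-(∑ j ∈ Finset.range l, c (s j)) / cA)
      ≤ Real.exp (-(∑ j ∈ Finset.range l, c (s j)) / Ω) := by
    apply Real.exp_le_exp.mpr
    rw [neg_div, neg_div]
    linarith
  have hfinal : f Astar - f (S l) ≤ Real.exp (-(∑ j ∈ Finset.range l, c (s j)) / Ω) * f Astar :=
    le_trans hkeyl (mul_le_mul_of_nonneg_right hexpm hfA)
  have hmain : (1 - Real.exp (-(∑ j ∈ Finset.range l, c (s j)) / Ω)) * f Astar ≤ f (S l) := by
    nlinarith [hfinal]
  refine ⟨?_, hmain⟩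
  simp only [hnorm, sub_zero]
  exact hmain
end
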